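/- arXiv:2605.04657 — 4 statements merged into one kernel-verified Lean document; each statement's English description precedes it below -/
import Mathlib

section
/- If position n is in a hump (not a step), then there exists a least m > n with h(m) < h(n), and moreover for the maximal j < n with h(j) + 1 = h(n) and h(j+1) = h(j) + 1 (the latest open call), all positions between j+1 and m−1 have stack height ≥ h(j) + 1. -/
/-- If position `n` is in a hump (not a step), there is a least `m > n` with
`h m < h n`; moreover, for the maximal `j < n` with `h j + 1 = h n` and
`h (j+1) = h j + 1` (the latest open call), all positions between `j+1` and `m-1`
have stack height at least `h j + 1`. -/
theorem hump_structure (h : ℕ → ℕ)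
    (hdiff : ∀ n, |(h (n + 1) : ℤ) - (h n : ℤ)| ≤ 1)
    (h0 : h 0 = 0)
    (n : ℕ)
    (hhump : ¬ (∀ m, n ≤ m → h n ≤ h m))
    (hpos : 1 ≤ h n) :
    ∃ m, (n < m ∧ h m < h n ∧ ∀ m', n < m' → h m' < h n → m ≤ m') ∧
      ∃ j, (j < n ∧ h j + 1 = h n ∧ h (j + 1) = h j + 1 ∧
              ∀ j', j' < n → h j' + 1 = h n → h (j' + 1) = h j' + 1 → j' ≤ j) ∧
        ∀ p, j + 1 ≤ p → p ≤ m - 1 → h j + 1 ≤ h p := by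
  push_neg at hhump
  obtain ⟨m0, hm0le, hm0lt⟩ := hhump
  have hstep : ∀ k, h (k + 1) ≤ h k + 1 := by
    intro k
    have := abs_le.mp (hdiff k)
    omega
  have hn0 : 0 < n := by
    rcases Nat.eq_zero_or_pos n with rfl | h' <;> omega
  have hm0n : n < m0 := by rcases eq_or_lt_of_le hm0le with rfl | h' <;> omega
  have hPm : ∃ m, n < m ∧ h m < h n := ⟨m0, hm0n, hm0lt⟩
  set m := Nat.find hPm with hmdef
  obtain ⟨hmn, hmlt⟩ := Nat.find_spec hPm
  have hmmin : ∀ m', n < m' → h m' < h n → m ≤ m' := fun m' h1 h2 =>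
    Nat.find_le ⟨h1, h2⟩
  refine ⟨m, ⟨hmn, hmlt, hmmin⟩, ?_⟩
  set j := Nat.findGreatest (fun j => h j < h n) (n - 1) with hjdef
  have hj0 : h 0 < h n := by omega
  have hjspec : h j < h n := Nat.findGreatest_spec (P := fun j => h j < h n) (Nat.zero_le _) hj0
  have hjlt : j < n := lt_of_le_of_lt (Nat.findGreatest_le _) (by omega)
  have hmaxj : ∀ k, j < k → k ≤ n - 1 → ¬ h k < h n := fun k hk hk' =>
    Nat.findGreatest_is_greatest (P := fun j => h j < h n) hk hk'
  have hge : ∀ p, j < p → p ≤ n → h n ≤ h p := by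
    intro p hp hpn
    rcases eq_or_lt_of_le hpn with rfl | h'
    · exact le_refl _
    · have := hmaxj p hp (by omega)
      omega
  have hj1 : h n ≤ h (j + 1) := hge (j + 1) (by omega) (by omega)
  have hj2 : h (j + 1) ≤ h j + 1 := hstep j
  refine ⟨j, ⟨hjlt, by omega, by omega, ?_⟩, ?_⟩
  · intro j' hj'n hj'h _
    by_contra hc
    have := hmaxj j' (by omega) (by omega)
    omega
  · intro p hp1 hp2
    rcases le_or_gt p n with hpn | hpn
    · have := hge p (by omega) hpn; omega
    · have hpm : p < m := by omega
      have := Nat.find_min hPm hpm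
      push_neg at this
      have := this hpn
      omega
end

section
/- Between two consecutive steps of the same height, matched calls and returns pair up: if positions n and m with n < m are both steps with h(n) = h(m), and no position strictly between n and m is a step, then every position p with n ≤ p < m at which a call occurs (h(p+1) = h(p) + 1) has a unique matching return, namely the least q > p with h(q+1) = h(p). -/
/-- Between two consecutive steps of the same height, matched calls and returns pair
up: if `n < m` are both steps with `h n = h m` and no position strictly between them
is a step, then every call position `p` with `n ≤ p < m` has a unique matching
return, namely the least `q > p` with `h (q+1) = h p`. -/
theorem calls_have_unique_matching_returns (h : ℕ → ℕ)
    (hdiff : ∀ k, |(h (k + 1) : ℤ) - (h k : ℤ)| ≤ 1)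
    (n m : ℕ) (hnm : n < m)
    (hstepn : ∀ l, n ≤ l → h n ≤ h l)
    (hstepm : ∀ l, m ≤ l → h m ≤ h l)
    (hheight : h n = h m)
    (hnostep : ∀ k, n < k → k < m → ¬ (∀ l, k ≤ l → h k ≤ h l)) :
    ∀ p, n ≤ p → p < m → h (p + 1) = h p + 1 →
      ∃! q, p < q ∧ h (q + 1) = h p ∧ ∀ q', p < q' → h (q' + 1) = h p → q ≤ q' := by
  intro p hnp hpm hcall
  -- First, existence of some q > p with h (q+1) = h p, by discrete IVT.
  have hmp : h m ≤ h p := hheight ▸ hstepn p hnp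
  have hex0 : ∃ k, h (p + 1 + k) ≤ h p := by
    refine ⟨m - (p + 1), ?_⟩
    have : p + 1 + (m - (p + 1)) = m := by omega
    rw [this]; exact hmp
  classical
  let k0 := Nat.find hex0
  have hk0 : h (p + 1 + k0) ≤ h p := Nat.find_spec hex0
  have hk0pos : 0 < k0 := by
    rcases Nat.eq_zero_or_pos k0 with h0 | h0
    · exfalso
      have := hk0
      rw [h0] at this
      simp only [Nat.add_zero] at this
      omega
    · exact h0
  have hprev : h p < h (p + k0) := by
    have := Nat.find_min hex0 (show k0 - 1 < k0 by omega)
    have heq : p + 1 + (k0 - 1) = p + k0 := by omega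
    rw [heq] at this
    omega
  have hstep : |(h (p + k0 + 1) : ℤ) - (h (p + k0) : ℤ)| ≤ 1 := hdiff (p + k0)
  have heq2 : p + k0 + 1 = p + 1 + k0 := by omega
  rw [heq2] at hstep
  have hexact : h (p + 1 + k0) = h p := by
    rw [abs_le] at hstep; omega
  have hexQ : ∃ q, p < q ∧ h (q + 1) = h p := by
    refine ⟨p + k0, by omega, ?_⟩
    have : p + k0 + 1 = p + 1 + k0 := by omega
    rw [this]; exact hexact
  let q0 := Nat.find hexQ
  have hq0 : p < q0 ∧ h (q0 + 1) = h p := Nat.find_spec hexQ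
  have hmin : ∀ q', p < q' → h (q' + 1) = h p → q0 ≤ q' := by
    intro q' h1 h2
    exact Nat.find_min' hexQ ⟨h1, h2⟩
  refine ⟨q0, ⟨hq0.1, hq0.2, hmin⟩, ?_⟩
  rintro q' ⟨h1, h2, h3⟩
  exact le_antisymm (h3 q0 hq0.1 hq0.2) (hmin q' h1 h2)
end

section
/- If Verifier has a winning strategy in the Gale-Stewart game G(L(A, T, P)), then the transition system T satisfies ∀π. ∃π'. A; more abstractly: if there is a function σ : Σ_1* → Σ_2 such that every outcome consistent with σ lies in the winning condition L, and the winning condition L is such that whenever Falsifier plays a path of T together with truthful prophecy annotations the outcome being in L implies merge(λ(ρ), λ(β)) ∈ L(A) with β a path of T, then for every trace t of T there is a trace t' of T with merge(t, t') ∈ L(A). -/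
namespace GameSoundness

variable {V A : Type*}

/-- `ρ` is a path of the transition system `(V, E, V_I, lab)`. -/
def IsPath (E : V → V → Prop) (VI : Set V) (ρ : ℕ → V) : Prop :=
  ρ 0 ∈ VI ∧ ∀ n, E (ρ n) (ρ (n + 1))

/-- Letters of Falsifier: a vertex together with a set of prophecy variables
(identified with the predicted prophecies themselves). -/
abbrev Sig1 (V A : Type*) := V × Set (Set (ℕ → A))

/-- Falsifier's predictions along `α` are truthful: for every position `i` and every
prophecy `P' ∈ P`, `P'` is predicted at `i` iff the labeled projected suffix of `α`
from `i` belongs to `P'`. -/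
def Truthful (P : Set (Set (ℕ → A))) (lab : V → A) (α : ℕ → Sig1 V A) : Prop :=
  ∀ i, ∀ P' ∈ P, (P' ∈ (α i).2 ↔ (fun n => lab ((α (i + n)).1)) ∈ P')

/-- The winning condition `L(𝒜, 𝔗, 𝒫)`: if the vertex projection of `α` is a path
of `𝔗`, then `β` is a path of `𝔗` and, if moreover all of Falsifier's predictions
are truthful, then the merge of the labeled traces is in `L(𝒜)`. -/
def WinCond (E : V → V → Prop) (VI : Set V) (lab : V → A)
    (LA : Set (ℕ → A × A)) (P : Set (Set (ℕ → A)))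
    (α : ℕ → Sig1 V A) (β : ℕ → V) : Prop :=
  IsPath E VI (fun i => (α i).1) →
    (IsPath E VI β ∧
      (Truthful P lab α → (fun n => (lab ((α n).1), lab (β n))) ∈ LA))

/-- The outcome `(α, β)` is consistent with Verifier's strategy `σ`: in each round
`i`, Verifier's move `β i` is given by `σ` applied to Falsifier's moves so far. -/
def Consistent (σ : List (Sig1 V A) → V) (α : ℕ → Sig1 V A) (β : ℕ → V) : Prop :=
  ∀ i, β i = σ ((List.range (i + 1)).map α)

/-- Soundness of the game-based characterization: if Verifier has a winning strategy
in the Gale–Stewart game with winning condition `L(𝒜, 𝔗, 𝒫)`, then the transition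
system satisfies `∀π. ∃π'. 𝒜`, i.e., for every path `ρ` of `𝔗` there is a path `ρ'`
of `𝔗` such that the merge of their traces is in `L(𝒜)`. -/
theorem soundness (E : V → V → Prop) (VI : Set V) (lab : V → A)
    (hsucc : ∀ v, ∃ v', E v v')
    (LA : Set (ℕ → A × A)) (P : Set (Set (ℕ → A))) (hP : P.Finite)
    (hwin : ∃ σ : List (Sig1 V A) → V,
      ∀ (α : ℕ → Sig1 V A) (β : ℕ → V),
        Consistent σ α β → WinCond E VI lab LA P α β) :
    ∀ ρ : ℕ → V, IsPath E VI ρ →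
      ∃ ρ' : ℕ → V, IsPath E VI ρ' ∧ (fun n => (lab (ρ n), lab (ρ' n))) ∈ LA := by
  obtain ⟨σ, hσ⟩ := hwin
  intro ρ hρ
  set α : ℕ → Sig1 V A :=
    fun n => (ρ n, {P' | P' ∈ P ∧ (fun k => lab (ρ (n + k))) ∈ P'}) with hα
  set β : ℕ → V := fun i => σ ((List.range (i + 1)).map α) with hβ
  have hcons : Consistent σ α β := fun i => rfl
  have hwc := hσ α β hcons hρ
  refine ⟨β, hwc.1, ?_⟩
  exact hwc.2 (fun i P' hP' => ⟨fun h => h.2, fun h => ⟨hP', h⟩⟩)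

end GameSoundness
end

section
/- Universality reduction correctness: let A be an automaton over Σ with transition set Δ and let L(B) ⊆ ((Σ ∪ Δ) × (Σ ∪ Δ))^ω be the language containing (i) all merges (w, τ) where w ∈ Σ^ω, τ ∈ Δ^ω, and τ induces an initial accepting run of A on w, and (ii) all merges (w, τ) with τ ∈ Δ^ω where w contains at least one letter from Δ. Then A accepts every word in Σ^ω if and only if for every t_0 ∈ (Σ ∪ Δ)^ω there exists t_1 ∈ (Σ ∪ Δ)^ω with merge(t_0, t_1) ∈ L(B). -/
namespace UnivReduction

/-- The language `L(ℬ)` of the reduction: over the alphabet `(Σ ⊕ Δ) × (Σ ⊕ Δ)`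
(letters of `Σ` and transitions of `Δ` modeled as the two summands of a sum type),
a merged word is in `L(ℬ)` iff its second component is a sequence `τ` of
transitions, and either the first component is a word `w ∈ Σ^ω` such that `τ`
induces an initial accepting run of `𝒜` on `w`, or the first component contains at
least one letter from `Δ`. -/
def LB {S D : Type*} (AccRun : (ℕ → D) → (ℕ → S) → Prop) :
    Set (ℕ → (S ⊕ D) × (S ⊕ D)) :=
  { x | ∃ τ : ℕ → D, (∀ n, (x n).2 = Sum.inr (τ n)) ∧
      ((∃ w : ℕ → S, (∀ n, (x n).1 = Sum.inl (w n)) ∧ AccRun τ w) ∨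
        (∃ n, ∃ d : D, (x n).1 = Sum.inr d)) }

/-- Correctness of the universality reduction: `𝒜` accepts every word in `Σ^ω`
(i.e., every `w` has an accepting run) iff for every `t₀ ∈ (Σ ∪ Δ)^ω` there exists
`t₁ ∈ (Σ ∪ Δ)^ω` with `merge(t₀, t₁) ∈ L(ℬ)`. -/
theorem universality_iff_forall_exists {S D : Type*}
    (AccRun : (ℕ → D) → (ℕ → S) → Prop) :
    (∀ w : ℕ → S, ∃ τ : ℕ → D, AccRun τ w) ↔
      (∀ t₀ : ℕ → S ⊕ D, ∃ t₁ : ℕ → S ⊕ D,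
        (fun n => (t₀ n, t₁ n)) ∈ LB AccRun) := by
  constructor
  · intro h t₀
    by_cases hall : ∀ n, ∃ s : S, t₀ n = Sum.inl s
    · choose w hw using hall
      obtain ⟨τ, hτ⟩ := h w
      exact ⟨fun n => Sum.inr (τ n), τ, fun n => rfl, Or.inl ⟨w, hw, hτ⟩⟩
    · push_neg at hall
      obtain ⟨n, hn⟩ := hall
      have hd : ∃ d : D, t₀ n = Sum.inr d := by
        cases ht : t₀ n with
        | inl s => exact absurd ht (hn s)
        | inr d => exact ⟨d, rfl⟩
      obtain ⟨d, hdn⟩ := hd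
      exact ⟨fun _ => Sum.inr d, fun _ => d, fun _ => rfl, Or.inr ⟨n, d, hdn⟩⟩
  · intro h w
    obtain ⟨t₁, τ, hτ, hcase⟩ := h (fun n => Sum.inl (w n))
    rcases hcase with ⟨w', hw', hacc⟩ | ⟨n, d, hd⟩
    · refine ⟨τ, ?_⟩
      have : w = w' := funext fun n => Sum.inl.inj (hw' n)
      exact this ▸ hacc
    · simp at hd

end UnivReduction
end
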